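/- For positive integers k and s, the constrained path counts satisfy: the number of lattice paths inside the strip 0 ≤ x ≤ 2k+2−2s from (0,0) to (2k+2−2s, 2k+2) with steps (x,y)→(x±1,y+1) equals Σ over pairs of disjoint subsets I₁, I₂ ⊆ {1,…,k} of b(2k+2−2s, 2k+2−2|I₁|−2|I₂|), where b(W,H) counts paths in the strip 0 ≤ x ≤ W from (0,0) to (W,H) whose first step is right, last step is right, and whose intermediate steps come in consecutive same-direction pairs. The decomposition is obtained by recording the y-coordinates of left-right step pairs at odd heights in I₁ and right-left pairs in I₂ and deleting them. -/

import Mathlib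

open Finset
open scoped Classical
noncomputable section

/-- Position (x-coordinate) after `t` steps of the path `p`, where `true` encodes a
right step `(x,y) ↦ (x+1,y+1)` and `false` a left step `(x,y) ↦ (x-1,y+1)`. -/
def pathPos {m : ℕ} (p : Fin m → Bool) (t : ℕ) : ℤ :=
  ∑ j : Fin m, if (j : ℕ) < t then (if p j then (1 : ℤ) else -1) else 0

/-- Generally admissible paths of size `(n,s)`: `n+2` diagonal steps starting at `(0,0)`,
the 0-th and the last step going right, with exactly `s` left steps
(hence ending at `(n+2-2s, n+2)`). -/
def admissible (n s : ℕ) : Finset (Fin (n + 2) → Bool) :=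
  Finset.univ.filter (fun p =>
    (∀ j : Fin (n + 2), (j : ℕ) = 0 → p j = true) ∧
    (∀ j : Fin (n + 2), (j : ℕ) = n + 1 → p j = true) ∧
    (Finset.univ.filter (fun j => p j = false)).card = s)

/-- The path crosses the line `x = 0`, i.e. reaches x-coordinate `-1` at some time. -/
def crossesLeft {m : ℕ} (p : Fin m → Bool) : Prop :=
  ∃ t ∈ Finset.range (m + 1), pathPos p t = -1

/-- A path of size `(n,s)` crosses the line `x = n+2-2s`,
i.e. reaches x-coordinate `n+3-2s` at some time. -/
def crossesRight (n s : ℕ) (p : Fin (n + 2) → Bool) : Prop :=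
  ∃ t ∈ Finset.range (n + 3), pathPos p t = (n : ℤ) + 3 - 2 * s

/-- `L n s`: the number of generally admissible paths of size `(n,s)`
crossing the line `x = 0`. -/
def L (n s : ℕ) : ℕ := ((admissible n s).filter (fun p => crossesLeft p)).card

/-- Constrained lattice paths: `n+2` diagonal steps from `(0,0)` to `(n+2-2s, n+2)`,
staying inside the strip `0 ≤ x ≤ n+2-2s`.  (`n` is allowed to be a negative integer,
with the convention that there are `max (n+2) 0` steps.) -/
def aPaths (n : ℤ) (s : ℕ) : Finset (Fin (n + 2).toNat → Bool) :=
  Finset.univ.filter (fun p =>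
    pathPos p (n + 2).toNat = n + 2 - 2 * s ∧
    ∀ t ∈ Finset.range ((n + 2).toNat + 1),
      0 ≤ pathPos p t ∧ pathPos p t ≤ n + 2 - 2 * s)

/-- `a n s`: the number of lattice paths from `(0,0)` to `(n+2-2s, n+2)` with steps
`(x,y) ↦ (x±1, y+1)` staying inside the strip `0 ≤ x ≤ n+2-2s`. -/
def a (n : ℤ) (s : ℕ) : ℕ := (aPaths n s).card

/-- Binomial coefficient `C(n,k)` with integer lower index, zero when `k < 0`. -/
def binom (n : ℕ) (k : ℤ) : ℕ := if k < 0 then 0 else n.choose k.toNat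

/-- `b W H`: the number of lattice paths from `(0,0)` to `(W,H)` with steps
`(x,y) ↦ (x±1,y+1)` staying in the strip `0 ≤ x ≤ W`, whose first and last steps go
right, and whose intermediate steps come in consecutive same-direction pairs
`(1,2), (3,4), …, (H-3,H-2)`. -/
def bPaths (W H : ℕ) : Finset (Fin H → Bool) :=
  Finset.univ.filter (fun p =>
    (∀ j : Fin H, (j : ℕ) = 0 → p j = true) ∧
    (∀ j : Fin H, (j : ℕ) = H - 1 → p j = true) ∧
    (∀ j1 j2 : Fin H, (j1 : ℕ) % 2 = 1 → (j2 : ℕ) = (j1 : ℕ) + 1 →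
      (j1 : ℕ) + 1 ≤ H - 2 → p j1 = p j2) ∧
    pathPos p H = (W : ℤ) ∧
    ∀ t ∈ Finset.range (H + 1), 0 ≤ pathPos p t ∧ pathPos p t ≤ (W : ℤ))

def b (W H : ℕ) : ℕ := (bPaths W H).card

-- auxiliary
def dir (b : Bool) : ℤ := if b then 1 else -1

def pstep (c : Bool × Bool) : ℤ := dir c.1 + dir c.2

def ppos {m : ℕ} (g : Fin m → Bool × Bool) (t : ℕ) : ℤ :=
  ∑ j : Fin m, if (j : ℕ) < t then pstep (g j) else 0

lemma sum_ite_lt_succ {m : ℕ} (f : Fin m → ℤ) (t : ℕ) (h : t < m) :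
    (∑ j : Fin m, if (j : ℕ) < t + 1 then f j else 0)
      = (∑ j : Fin m, if (j : ℕ) < t then f j else 0) + f ⟨t, h⟩ := by
  have : ∀ j : Fin m, (if (j : ℕ) < t + 1 then f j else 0)
      = (if (j : ℕ) < t then f j else 0) + (if j = ⟨t, h⟩ then f j else 0) := by
    intro j
    rcases eq_or_ne j ⟨t, h⟩ with rfl | hne
    · simp
    · have : (j : ℕ) ≠ t := fun hc => hne (Fin.ext hc)
      split_ifs <;> omega
  rw [Finset.sum_congr rfl (fun j _ => this j), Finset.sum_add_distrib]
  simp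

lemma pathPos_zero {m : ℕ} (p : Fin m → Bool) : pathPos p 0 = 0 := by simp [pathPos]

lemma pathPos_succ {m : ℕ} (p : Fin m → Bool) (t : ℕ) (h : t < m) :
    pathPos p (t + 1) = pathPos p t + dir (p ⟨t, h⟩) := by
  simpa [pathPos, dir] using sum_ite_lt_succ (fun j => if p j then (1:ℤ) else -1) t h

lemma ppos_zero {m : ℕ} (g : Fin m → Bool × Bool) : ppos g 0 = 0 := by simp [ppos]

lemma ppos_succ {m : ℕ} (g : Fin m → Bool × Bool) (t : ℕ) (h : t < m) :
    ppos g (t + 1) = ppos g t + pstep (g ⟨t, h⟩) :=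
  sum_ite_lt_succ (fun j => pstep (g j)) t h

lemma pstep_even (c : Bool × Bool) : Even (pstep c) := by
  rcases c with ⟨b1, b2⟩ <;> cases b1 <;> cases b2 <;> decide

lemma ppos_even {m : ℕ} (g : Fin m → Bool × Bool) (t : ℕ) : Even (ppos g t) := by
  apply Finset.even_sum
  intro j _
  split
  · exact pstep_even _
  · exact Even.zero

lemma dir_bound (b : Bool) : -1 ≤ dir b ∧ dir b ≤ 1 := by cases b <;> simp [dir]

lemma ppos_cons {m : ℕ} (c : Bool × Bool) (g : Fin m → Bool × Bool) (t : ℕ) :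
    ppos (Fin.cons c g) (t + 1) = pstep c + ppos g t := by
  rw [ppos, Fin.sum_univ_succ]
  simp only [Fin.cons_zero, Fin.cons_succ, Fin.val_zero, Fin.val_succ]
  congr 1
  simp [ppos]

lemma pathPos_cast {m m' : ℕ} (h : m' = m) (p : Fin m → Bool) (t : ℕ) :
    pathPos (fun j : Fin m' => p (Fin.cast h j)) t = pathPos p t := by
  subst h; rfl
def c2 (e : ℤ) : ℕ → ℤ → ℕ
  | 0, x => if x = e ∧ 0 ≤ x ∧ x ≤ e then 1 else 0
  | m+1, x => if 0 ≤ x ∧ x ≤ e then c2 e m (x+2) + c2 e m (x-2) else 0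

def c4 (e : ℤ) : ℕ → ℤ → ℕ
  | 0, x => if x = e ∧ 0 ≤ x ∧ x ≤ e then 1 else 0
  | m+1, x => if 0 ≤ x ∧ x ≤ e then c4 e m (x+2) + c4 e m (x-2) + 2 * c4 e m x else 0

lemma c2_eq_zero {e x : ℤ} (m : ℕ) (h : ¬(0 ≤ x ∧ x ≤ e)) : c2 e m x = 0 := by
  cases m with
  | zero => simp only [c2]; rw [if_neg]; tauto
  | succ m => simp only [c2]; rw [if_neg h]

def G4 (e : ℤ) (m : ℕ) (x : ℤ) : Finset (Fin m → Bool × Bool) :=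
  Finset.univ.filter (fun g => x + ppos g m = e ∧
    ∀ t ∈ Finset.range (m+1), 0 ≤ x + ppos g t ∧ x + ppos g t ≤ e)

def G2 (e : ℤ) (m : ℕ) (x : ℤ) : Finset (Fin m → Bool × Bool) :=
  Finset.univ.filter (fun g => (∀ j, (g j).1 = (g j).2) ∧ x + ppos g m = e ∧
    ∀ t ∈ Finset.range (m+1), 0 ≤ x + ppos g t ∧ x + ppos g t ≤ e)

lemma ppos_fin0 (g : Fin 0 → Bool × Bool) (t : ℕ) : ppos g t = 0 := by simp [ppos]

lemma ppos_tail {m : ℕ} (g : Fin (m+1) → Bool × Bool) (t : ℕ) :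
    ppos g (t+1) = pstep (g 0) + ppos (Fin.tail g) t := by
  conv_lhs => rw [← Fin.cons_self_tail g]
  exact ppos_cons _ _ t

lemma mem_G4_succ {e x : ℤ} {m : ℕ} (g : Fin (m+1) → Bool × Bool) :
    g ∈ G4 e (m+1) x ↔ ((0 ≤ x ∧ x ≤ e) ∧ Fin.tail g ∈ G4 e m (x + pstep (g 0))) := by
  simp only [G4, Finset.mem_filter, Finset.mem_univ, true_and, Finset.mem_range]
  constructor
  · rintro ⟨hend, hstrip⟩
    have h0 := hstrip 0 (by omega)
    rw [ppos_zero, add_zero] at h0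
    rw [ppos_tail g m] at hend
    refine ⟨h0, by linarith, ?_⟩
    intro t ht
    have h2 := hstrip (t+1) (by omega)
    rw [ppos_tail g t] at h2
    exact ⟨by linarith [h2.1], by linarith [h2.2]⟩
  · rintro ⟨h0, hend, hstrip⟩
    refine ⟨by rw [ppos_tail g m]; linarith, ?_⟩
    intro t ht
    match t with
    | 0 => simpa [ppos_zero] using h0
    | t+1 =>
      have h2 := hstrip t (by omega)
      rw [ppos_tail g t]
      exact ⟨by linarith [h2.1], by linarith [h2.2]⟩

lemma mem_G2_succ {e x : ℤ} {m : ℕ} (g : Fin (m+1) → Bool × Bool) :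
    g ∈ G2 e (m+1) x ↔ ((0 ≤ x ∧ x ≤ e) ∧ (g 0).1 = (g 0).2 ∧
      Fin.tail g ∈ G2 e m (x + pstep (g 0))) := by
  have h4 := mem_G4_succ (e := e) (x := x) g
  simp only [G4, G2, Finset.mem_filter, Finset.mem_univ, true_and] at h4 ⊢
  constructor
  · rintro ⟨hall, h1, h2⟩
    obtain ⟨hx, h1', h2'⟩ := h4.mp ⟨h1, h2⟩
    exact ⟨hx, hall 0, fun j => hall j.succ, h1', h2'⟩
  · rintro ⟨hx, h00, hall, h1, h2⟩
    have := h4.mpr ⟨hx, h1, h2⟩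
    refine ⟨?_, this.1, this.2⟩
    intro j
    rcases Fin.eq_zero_or_eq_succ j with rfl | ⟨j', rfl⟩
    · exact h00
    · exact hall j'

lemma G4_zero_of_not {e x : ℤ} {m : ℕ} (h : ¬(0 ≤ x ∧ x ≤ e)) : G4 e m x = ∅ := by
  rw [Finset.eq_empty_iff_forall_notMem]
  intro g hg
  simp only [G4, Finset.mem_filter, Finset.mem_univ, true_and] at hg
  have := hg.2 0 (by simp)
  rw [ppos_zero, add_zero] at this
  exact h this

lemma card_G4 (e : ℤ) (m : ℕ) (x : ℤ) : (G4 e m x).card = c4 e m x := by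
  induction m generalizing x with
  | zero =>
    simp only [c4]
    by_cases h : x = e ∧ 0 ≤ x ∧ x ≤ e
    · rw [if_pos h]
      have : G4 e 0 x = Finset.univ := by
        rw [Finset.eq_univ_iff_forall]
        intro g
        simp only [G4, Finset.mem_filter, Finset.mem_univ, true_and, ppos_fin0, add_zero]
        exact ⟨h.1, fun t _ => ⟨h.2.1, h.2.2⟩⟩
      rw [this, Finset.card_univ]
      simp
    · rw [if_neg h, Finset.card_eq_zero, Finset.eq_empty_iff_forall_notMem]
      intro g hg
      simp only [G4, Finset.mem_filter, Finset.mem_univ, true_and, ppos_fin0, add_zero] at hg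
      have := hg.2 0 (by simp)
      exact h ⟨hg.1, this.1, this.2⟩
  | succ m ih =>
    by_cases hx : 0 ≤ x ∧ x ≤ e
    · have hcard : (G4 e (m+1) x).card
          = ((Finset.univ : Finset (Bool × Bool)).sigma
              (fun c => G4 e m (x + pstep c))).card := by
        apply Finset.card_bij' (i := fun g _ => ⟨g 0, Fin.tail g⟩)
          (j := fun cg _ => Fin.cons cg.1 cg.2)
        case hi =>
          intro g hg
          rw [Finset.mem_sigma]
          exact ⟨Finset.mem_univ _, ((mem_G4_succ g).mp hg).2⟩
        case hj =>
          intro cg hcg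
          rw [Finset.mem_sigma] at hcg
          rw [mem_G4_succ]
          refine ⟨hx, ?_⟩
          rw [Fin.cons_zero, Fin.tail_cons]
          exact hcg.2
        case left_inv => intro g _; exact Fin.cons_self_tail g
        case right_inv =>
          intro cg _
          rcases cg with ⟨c, g2⟩
          simp
      rw [hcard, Finset.card_sigma]
      simp only [ih]
      rw [show c4 e (m+1) x = c4 e m (x+2) + c4 e m (x-2) + 2 * c4 e m x from by
        simp only [c4]; rw [if_pos hx]]
      rw [Fintype.sum_prod_type]
      rw [show (Finset.univ : Finset Bool) = {true, false} from by decide]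
      simp only [Finset.sum_insert, Finset.mem_singleton, Finset.sum_singleton,
        Bool.true_eq_false, not_false_iff]
      norm_num [pstep, dir]
      rw [show x + -2 = x - 2 from by ring]
      omega
    · rw [G4_zero_of_not hx]
      simp only [c4]
      rw [if_neg hx, Finset.card_empty]

lemma G2_zero_of_not {e x : ℤ} {m : ℕ} (h : ¬(0 ≤ x ∧ x ≤ e)) : G2 e m x = ∅ := by
  rw [Finset.eq_empty_iff_forall_notMem]
  intro g hg
  simp only [G2, Finset.mem_filter, Finset.mem_univ, true_and] at hg
  have := hg.2.2 0 (by simp)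
  rw [ppos_zero, add_zero] at this
  exact h this

lemma card_G2 (e : ℤ) (m : ℕ) (x : ℤ) : (G2 e m x).card = c2 e m x := by
  induction m generalizing x with
  | zero =>
    simp only [c2]
    by_cases h : x = e ∧ 0 ≤ x ∧ x ≤ e
    · rw [if_pos h]
      have : G2 e 0 x = Finset.univ := by
        rw [Finset.eq_univ_iff_forall]
        intro g
        simp only [G2, Finset.mem_filter, Finset.mem_univ, true_and, ppos_fin0, add_zero]
        exact ⟨fun j => j.elim0, h.1, fun t _ => ⟨h.2.1, h.2.2⟩⟩
      rw [this, Finset.card_univ]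
      simp
    · rw [if_neg h, Finset.card_eq_zero, Finset.eq_empty_iff_forall_notMem]
      intro g hg
      simp only [G2, Finset.mem_filter, Finset.mem_univ, true_and, ppos_fin0, add_zero] at hg
      have := hg.2.2 0 (by simp)
      exact h ⟨hg.2.1, this.1, this.2⟩
  | succ m ih =>
    by_cases hx : 0 ≤ x ∧ x ≤ e
    · have hcard : (G2 e (m+1) x).card
          = ((Finset.univ.filter (fun c : Bool × Bool => c.1 = c.2)).sigma
              (fun c => G2 e m (x + pstep c))).card := by
        apply Finset.card_bij' (i := fun g _ => ⟨g 0, Fin.tail g⟩)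
          (j := fun cg _ => Fin.cons cg.1 cg.2)
        case hi =>
          intro g hg
          rw [Finset.mem_sigma]
          obtain ⟨_, h00, htl⟩ := (mem_G2_succ g).mp hg
          exact ⟨by simp [h00], htl⟩
        case hj =>
          intro cg hcg
          rw [Finset.mem_sigma, Finset.mem_filter] at hcg
          rw [mem_G2_succ]
          refine ⟨hx, ?_, ?_⟩
          · rw [Fin.cons_zero]; exact hcg.1.2
          · rw [Fin.cons_zero, Fin.tail_cons]; exact hcg.2
        case left_inv => intro g _; exact Fin.cons_self_tail g
        case right_inv =>
          intro cg _
          rcases cg with ⟨c, g2⟩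
          simp
      rw [hcard, Finset.card_sigma]
      simp only [ih]
      rw [show c2 e (m+1) x = c2 e m (x+2) + c2 e m (x-2) from by
        simp only [c2]; rw [if_pos hx]]
      rw [show Finset.univ.filter (fun c : Bool × Bool => c.1 = c.2)
          = {(true, true), (false, false)} from by decide]
      rw [Finset.sum_insert (by decide), Finset.sum_singleton]
      norm_num [pstep, dir]
      rw [show x + -2 = x - 2 from by ring]
    · rw [G2_zero_of_not hx]
      simp only [c2]
      rw [if_neg hx, Finset.card_empty]

lemma key_sum (e : ℤ) (S : Finset ℕ) : ∀ x : ℤ,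
    (∑ I1 ∈ S.powerset, ∑ I2 ∈ S.powerset,
      if Disjoint I1 I2 then c2 e (S.card - I1.card - I2.card) x else 0)
      = c4 e S.card x := by
  induction S using Finset.induction_on with
  | empty => intro x; simp [c2, c4]
  | @insert a S ha ih =>
    intro x
    rw [Finset.sum_powerset_insert ha]
    simp only [Finset.sum_powerset_insert ha]
    have hcS : (insert a S).card = S.card + 1 := Finset.card_insert_of_notMem ha
    by_cases hx : 0 ≤ x ∧ x ≤ e
    · have h11 : ∀ I1 ∈ S.powerset, ∀ I2 ∈ S.powerset,
          (if Disjoint I1 I2 then c2 e ((insert a S).card - I1.card - I2.card) x else 0)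
          = (if Disjoint I1 I2 then c2 e (S.card - I1.card - I2.card) (x+2) else 0)
            + (if Disjoint I1 I2 then c2 e (S.card - I1.card - I2.card) (x-2) else 0) := by
        intro I1 h1 I2 h2
        rw [Finset.mem_powerset] at h1 h2
        by_cases hd : Disjoint I1 I2
        · simp only [if_pos hd]
          have hle : I1.card + I2.card ≤ S.card := by
            rw [← Finset.card_union_of_disjoint hd]
            exact Finset.card_le_card (Finset.union_subset h1 h2)
          rw [hcS, show S.card + 1 - I1.card - I2.card
            = (S.card - I1.card - I2.card) + 1 from by omega]
          simp only [c2]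
          rw [if_pos hx]
        · simp [hd]
      have h12 : ∀ I1 ∈ S.powerset, ∀ I2 ∈ S.powerset,
          (if Disjoint I1 (insert a I2) then
            c2 e ((insert a S).card - I1.card - (insert a I2).card) x else 0)
          = (if Disjoint I1 I2 then c2 e (S.card - I1.card - I2.card) x else 0) := by
        intro I1 h1 I2 h2
        rw [Finset.mem_powerset] at h1 h2
        have ha1 : a ∉ I1 := fun h => ha (h1 h)
        have ha2 : a ∉ I2 := fun h => ha (h2 h)
        rw [Finset.card_insert_of_notMem ha2, hcS,
          show S.card + 1 - I1.card - (I2.card + 1) = S.card - I1.card - I2.card from by omega]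
        by_cases hd : Disjoint I1 I2
        · rw [if_pos hd, if_pos (Finset.disjoint_insert_right.mpr ⟨ha1, hd⟩)]
        · rw [if_neg hd, if_neg (fun hc => hd (Finset.disjoint_insert_right.mp hc).2)]
      have h21 : ∀ I1 ∈ S.powerset, ∀ I2 ∈ S.powerset,
          (if Disjoint (insert a I1) I2 then
            c2 e ((insert a S).card - (insert a I1).card - I2.card) x else 0)
          = (if Disjoint I1 I2 then c2 e (S.card - I1.card - I2.card) x else 0) := by
        intro I1 h1 I2 h2
        rw [Finset.mem_powerset] at h1 h2
        have ha1 : a ∉ I1 := fun h => ha (h1 h)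
        have ha2 : a ∉ I2 := fun h => ha (h2 h)
        rw [Finset.card_insert_of_notMem ha1, hcS,
          show S.card + 1 - (I1.card + 1) - I2.card = S.card - I1.card - I2.card from by omega]
        by_cases hd : Disjoint I1 I2
        · rw [if_pos hd, if_pos (Finset.disjoint_insert_left.mpr ⟨ha2, hd⟩)]
        · rw [if_neg hd, if_neg (fun hc => hd (Finset.disjoint_insert_left.mp hc).2)]
      have h22 : ∀ I1 ∈ S.powerset, ∀ I2 ∈ S.powerset,
          (if Disjoint (insert a I1) (insert a I2) then
            c2 e ((insert a S).card - (insert a I1).card - (insert a I2).card) x else 0) = 0 := by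
        intro I1 _ I2 _
        rw [if_neg]
        intro hd
        exact (Finset.disjoint_left.mp hd (Finset.mem_insert_self a I1))
          (Finset.mem_insert_self a I2)
      have e11 : (∑ I1 ∈ S.powerset, ∑ I2 ∈ S.powerset,
          if Disjoint I1 I2 then c2 e ((insert a S).card - I1.card - I2.card) x else 0)
          = c4 e S.card (x+2) + c4 e S.card (x-2) := by
        rw [Finset.sum_congr rfl (fun I1 h1 =>
          Finset.sum_congr rfl (fun I2 h2 => h11 I1 h1 I2 h2))]
        simp only [Finset.sum_add_distrib]
        rw [ih (x+2), ih (x-2)]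
      have e12 : (∑ I1 ∈ S.powerset, ∑ I2 ∈ S.powerset,
          if Disjoint I1 (insert a I2) then
            c2 e ((insert a S).card - I1.card - (insert a I2).card) x else 0)
          = c4 e S.card x := by
        rw [Finset.sum_congr rfl (fun I1 h1 =>
          Finset.sum_congr rfl (fun I2 h2 => h12 I1 h1 I2 h2))]
        exact ih x
      have e21 : (∑ I1 ∈ S.powerset, ∑ I2 ∈ S.powerset,
          if Disjoint (insert a I1) I2 then
            c2 e ((insert a S).card - (insert a I1).card - I2.card) x else 0)
          = c4 e S.card x := by
        rw [Finset.sum_congr rfl (fun I1 h1 =>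
          Finset.sum_congr rfl (fun I2 h2 => h21 I1 h1 I2 h2))]
        exact ih x
      have e22 : (∑ I1 ∈ S.powerset, ∑ I2 ∈ S.powerset,
          if Disjoint (insert a I1) (insert a I2) then
            c2 e ((insert a S).card - (insert a I1).card - (insert a I2).card) x else 0)
          = 0 := by
        rw [Finset.sum_congr rfl (fun I1 h1 =>
          Finset.sum_congr rfl (fun I2 h2 => h22 I1 h1 I2 h2))]
        simp
      rw [Finset.sum_add_distrib, Finset.sum_add_distrib, e11, e12, e21, e22, hcS]
      simp only [c4]
      rw [if_pos hx]
      omega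
    · have hz : ∀ (m : ℕ), c2 e m x = 0 := fun m => c2_eq_zero m hx
      have hz4 : c4 e (insert a S).card x = 0 := by
        rw [hcS]; simp only [c4]; rw [if_neg hx]
      rw [hz4]
      simp [hz]

def pairsOf {k : ℕ} (p : Fin (2*k+2) → Bool) : Fin k → Bool × Bool :=
  fun i => (p ⟨2*(i:ℕ)+1, by have := i.isLt; omega⟩, p ⟨2*(i:ℕ)+2, by have := i.isLt; omega⟩)

def glue {k : ℕ} (g : Fin k → Bool × Bool) : Fin (2*k+2) → Bool :=
  fun j => if h0 : (j:ℕ) = 0 then true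
    else if h1 : (j:ℕ) = 2*k+1 then true
    else if h2 : (j:ℕ) % 2 = 1 then (g ⟨(j:ℕ)/2, by have := j.isLt; omega⟩).1
    else (g ⟨(j:ℕ)/2 - 1, by have := j.isLt; omega⟩).2

lemma dir_pm (b : Bool) : dir b = 1 ∨ dir b = -1 := by cases b <;> simp [dir]

lemma dir_eq_one {b : Bool} (h : dir b = 1) : b = true := by
  cases b
  · simp [dir] at h
  · rfl

lemma pathPos_succ' {m : ℕ} (p : Fin m → Bool) (t u : ℕ) (hu : u = t + 1) (h : t < m) :
    pathPos p u = pathPos p t + dir (p ⟨t, h⟩) := by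
  subst hu; exact pathPos_succ p t h

lemma pathPos_odd {k : ℕ} (p : Fin (2*k+2) → Bool) (t : ℕ) (ht : t ≤ k) :
    pathPos p (2*t+1) = dir (p ⟨0, by omega⟩) + ppos (pairsOf p) t := by
  induction t with
  | zero =>
    rw [show 2*0+1 = 0+1 from rfl, pathPos_succ p 0 (by omega), pathPos_zero, ppos_zero]
    ring
  | succ t iht =>
    have h1 : 2*t+1 < 2*k+2 := by omega
    have h2 : 2*t+2 < 2*k+2 := by omega
    have htk : t < k := by omega
    rw [pathPos_succ' p (2*t+2) (2*(t+1)+1) (by ring) h2,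
      pathPos_succ' p (2*t+1) (2*t+2) (by ring) h1,
      iht (by omega), ppos_succ _ t htk]
    have hps : pstep (pairsOf p ⟨t, htk⟩) = dir (p ⟨2*t+1, h1⟩) + dir (p ⟨2*t+2, h2⟩) := rfl
    rw [hps]
    ring

lemma pairsOf_glue {k : ℕ} (g : Fin k → Bool × Bool) : pairsOf (glue g) = g := by
  funext i
  have hi := i.isLt
  rw [show pairsOf (glue g) i
    = (glue g ⟨2*(i:ℕ)+1, by omega⟩, glue g ⟨2*(i:ℕ)+2, by omega⟩) from rfl]
  have e1 : glue g ⟨2*(i:ℕ)+1, by omega⟩ = (g i).1 := by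
    unfold glue
    rw [dif_neg (show ¬(2*(i:ℕ)+1 = 0) from by omega),
      dif_neg (show ¬(2*(i:ℕ)+1 = 2*k+1) from by omega),
      dif_pos (show (2*(i:ℕ)+1) % 2 = 1 from by omega)]
    congr 1
    congr 1
    apply Fin.ext
    show (2*(i:ℕ)+1)/2 = (i:ℕ)
    omega
  have e2 : glue g ⟨2*(i:ℕ)+2, by omega⟩ = (g i).2 := by
    unfold glue
    rw [dif_neg (show ¬(2*(i:ℕ)+2 = 0) from by omega),
      dif_neg (show ¬(2*(i:ℕ)+2 = 2*k+1) from by omega),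
      dif_neg (show ¬((2*(i:ℕ)+2) % 2 = 1) from by omega)]
    congr 1
    congr 1
    apply Fin.ext
    show (2*(i:ℕ)+2)/2 - 1 = (i:ℕ)
    omega
  rw [e1, e2]

lemma glue_pairsOf {k : ℕ} (p : Fin (2*k+2) → Bool)
    (hp0 : p ⟨0, by omega⟩ = true) (hpl : p ⟨2*k+1, by omega⟩ = true) :
    glue (pairsOf p) = p := by
  funext j
  have hj := j.isLt
  unfold glue
  by_cases h0 : (j:ℕ) = 0
  · rw [dif_pos h0]
    have hje : j = ⟨0, by omega⟩ := Fin.ext h0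
    rw [hje]
    exact hp0.symm
  rw [dif_neg h0]
  by_cases h1 : (j:ℕ) = 2*k+1
  · rw [dif_pos h1]
    have hje : j = ⟨2*k+1, by omega⟩ := Fin.ext h1
    rw [hje]
    exact hpl.symm
  rw [dif_neg h1]
  by_cases h2 : (j:ℕ) % 2 = 1
  · rw [dif_pos h2]
    show p ⟨2*((j:ℕ)/2)+1, by omega⟩ = p j
    congr 1
    apply Fin.ext
    show 2*((j:ℕ)/2)+1 = (j:ℕ)
    omega
  · rw [dif_neg h2]
    show p ⟨2*((j:ℕ)/2-1)+2, by omega⟩ = p j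
    congr 1
    apply Fin.ext
    show 2*((j:ℕ)/2-1)+2 = (j:ℕ)
    omega

lemma forward_core {k : ℕ} (K : ℤ) (hK : 0 ≤ K) (p : Fin (2*k+2) → Bool)
    (hend : pathPos p (2*k+2) = 2*K+2)
    (hstrip : ∀ t ∈ Finset.range (2*k+3), 0 ≤ pathPos p t ∧ pathPos p t ≤ 2*K+2) :
    p ⟨0, by omega⟩ = true ∧ p ⟨2*k+1, by omega⟩ = true ∧
    ((0:ℤ) + ppos (pairsOf p) k = 2*K ∧
      ∀ t ∈ Finset.range (k+1), 0 ≤ (0:ℤ) + ppos (pairsOf p) t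
        ∧ (0:ℤ) + ppos (pairsOf p) t ≤ 2*K) := by
  have hd0 : dir (p ⟨0, by omega⟩) = 1 := by
    have h1 := (hstrip 1 (by simp)).1
    rw [pathPos_succ' p 0 1 rfl (by omega), pathPos_zero, zero_add] at h1
    rcases dir_pm (p ⟨0, by omega⟩) with h | h
    · exact h
    · omega
  have hp0 : p ⟨0, by omega⟩ = true := dir_eq_one hd0
  have hstrip' : ∀ t, t ≤ k → 0 ≤ ppos (pairsOf p) t ∧ ppos (pairsOf p) t ≤ 2*K := by
    intro t ht
    have hb := hstrip (2*t+1) (by simp; omega)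
    rw [pathPos_odd p t ht, hd0] at hb
    obtain ⟨r, hr⟩ := ppos_even (pairsOf p) t
    omega
  have hlast : pathPos p (2*k+2) = pathPos p (2*k+1) + dir (p ⟨2*k+1, by omega⟩) :=
    pathPos_succ' p (2*k+1) (2*k+2) rfl (by omega)
  have hodd : pathPos p (2*k+1) = 1 + ppos (pairsOf p) k := by
    rw [pathPos_odd p k le_rfl, hd0]
  have hk2 := (hstrip' k le_rfl).2
  have hdl : dir (p ⟨2*k+1, by omega⟩) = 1 := by
    rcases dir_pm (p ⟨2*k+1, by omega⟩) with h | h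
    · exact h
    · omega
  refine ⟨hp0, dir_eq_one hdl, by omega, ?_⟩
  intro t ht
  rw [Finset.mem_range] at ht
  have := hstrip' t (by omega)
  omega

lemma backward_core {k : ℕ} (K : ℤ) (hK : 0 ≤ K) (g : Fin k → Bool × Bool)
    (hend : (0:ℤ) + ppos g k = 2*K)
    (hstrip : ∀ t ∈ Finset.range (k+1), 0 ≤ (0:ℤ) + ppos g t ∧ (0:ℤ) + ppos g t ≤ 2*K) :
    pathPos (glue g) (2*k+2) = 2*K+2 ∧
    ∀ t ∈ Finset.range (2*k+3), 0 ≤ pathPos (glue g) t ∧ pathPos (glue g) t ≤ 2*K+2 := by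
  set p := glue g with hp
  have hp0 : p ⟨0, by omega⟩ = true := by rw [hp]; unfold glue; rw [dif_pos rfl]
  have hpl : p ⟨2*k+1, by omega⟩ = true := by
    rw [hp]; unfold glue
    rw [dif_neg (show ¬(2*k+1 = 0) from by omega), dif_pos rfl]
  have hd0 : dir (p ⟨0, by omega⟩) = 1 := by rw [hp0]; rfl
  have hpairs : pairsOf p = g := by rw [hp]; exact pairsOf_glue g
  have hodd : ∀ t, t ≤ k → pathPos p (2*t+1) = 1 + ppos g t := by
    intro t ht
    rw [pathPos_odd p t ht, hd0, hpairs]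
  have hstrip' : ∀ t, t ≤ k → 0 ≤ ppos g t ∧ ppos g t ≤ 2*K := by
    intro t ht
    have := hstrip t (by simp; omega)
    omega
  constructor
  · rw [pathPos_succ' p (2*k+1) (2*k+2) rfl (by omega), hodd k le_rfl, hpl]
    show 1 + ppos g k + 1 = 2*K+2
    omega
  · intro t ht
    rw [Finset.mem_range] at ht
    rcases Nat.even_or_odd t with ⟨r, hr⟩ | ⟨r, hr⟩
    · match r, hr with
      | 0, hr =>
        subst hr
        rw [pathPos_zero]
        omega
      | r+1, hr =>
        subst hr
        have hrk : r ≤ k := by omega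
        have h1 : 2*r+1 < 2*k+2 := by omega
        rw [pathPos_succ' p (2*r+1) (r+1+(r+1)) (by ring) h1, hodd r hrk]
        have := hstrip' r hrk
        rcases dir_pm (p ⟨2*r+1, h1⟩) with h | h <;> rw [h] <;> omega
    · subst hr
      have hrk : r ≤ k := by omega
      rw [hodd r hrk]
      have := hstrip' r hrk
      omega

lemma stepA (k s : ℕ) (hs : s ≤ k) :
    a (2*(k:ℤ)) s = c4 (2*((k:ℤ) - s)) k 0 := by
  have hT : ((2*(k:ℤ)) + 2).toNat = 2*k+2 := by omega
  set K : ℤ := (k:ℤ) - s with hKdef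
  have hK : 0 ≤ K := by simp [hKdef]; exact_mod_cast hs
  have hE : (2*(k:ℤ)) + 2 - 2*(s:ℤ) = 2*K + 2 := by rw [hKdef]; ring
  have hq : ∀ (p : Fin ((2*(k:ℤ)+2).toNat) → Bool) (t : ℕ),
      pathPos (fun j : Fin (2*k+2) => p (Fin.cast hT.symm j)) t = pathPos p t :=
    fun p t => pathPos_cast hT.symm p t
  have hmem : ∀ p, p ∈ aPaths (2*(k:ℤ)) s ↔
      (pathPos (fun j : Fin (2*k+2) => p (Fin.cast hT.symm j)) (2*k+2) = 2*K+2 ∧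
       ∀ t ∈ Finset.range (2*k+3),
         0 ≤ pathPos (fun j : Fin (2*k+2) => p (Fin.cast hT.symm j)) t ∧
         pathPos (fun j : Fin (2*k+2) => p (Fin.cast hT.symm j)) t ≤ 2*K+2) := by
    intro p
    simp only [aPaths, Finset.mem_filter, Finset.mem_univ, true_and, hq, hT, hE]
  have hmemG : ∀ g, g ∈ G4 (2*K) k 0 ↔
      ((0:ℤ) + ppos g k = 2*K ∧
        ∀ t ∈ Finset.range (k+1), 0 ≤ (0:ℤ) + ppos g t ∧ (0:ℤ) + ppos g t ≤ 2*K) := by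
    intro g
    simp only [G4, Finset.mem_filter, Finset.mem_univ, true_and]
  rw [a, ← card_G4]
  apply Finset.card_bij'
    (i := fun p _ => pairsOf (fun j : Fin (2*k+2) => p (Fin.cast hT.symm j)))
    (j := fun g _ => fun j0 : Fin ((2*(k:ℤ)+2).toNat) => glue g (Fin.cast hT j0))
  case hi =>
    intro p hp
    rw [hmem] at hp
    rw [hmemG]
    exact (forward_core K hK _ hp.1 hp.2).2.2
  case hj =>
    intro g hg
    rw [hmemG] at hg
    rw [hmem]
    have hb := backward_core K hK g hg.1 hg.2
    have : (fun j : Fin (2*k+2) =>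
        (fun j0 : Fin ((2*(k:ℤ)+2).toNat) => glue g (Fin.cast hT j0)) (Fin.cast hT.symm j))
        = glue g := by
      funext j
      simp
    rw [this]
    exact hb
  case left_inv =>
    intro p hp
    rw [hmem] at hp
    have hc := forward_core K hK _ hp.1 hp.2
    have hgp := glue_pairsOf (fun j : Fin (2*k+2) => p (Fin.cast hT.symm j)) hc.1 hc.2.1
    funext j0
    show glue (pairsOf fun j : Fin (2*k+2) => p (Fin.cast hT.symm j)) (Fin.cast hT j0) = p j0
    rw [hgp]
    simp
  case right_inv =>
    intro g _
    have : (fun j : Fin (2*k+2) =>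
        (fun j0 : Fin ((2*(k:ℤ)+2).toNat) => glue g (Fin.cast hT j0)) (Fin.cast hT.symm j))
        = glue g := by
      funext j
      simp
    show pairsOf (fun j : Fin (2*k+2) =>
        (fun j0 : Fin ((2*(k:ℤ)+2).toNat) => glue g (Fin.cast hT j0)) (Fin.cast hT.symm j)) = g
    rw [this, pairsOf_glue]

lemma stepB (v m : ℕ) : b (2*v+2) (2*m+2) = c2 (2*(v:ℤ)) m 0 := by
  have hK : (0:ℤ) ≤ (v:ℤ) := by positivity
  have hmemG : ∀ g, g ∈ G2 (2*(v:ℤ)) m 0 ↔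
      ((∀ j, (g j).1 = (g j).2) ∧ (0:ℤ) + ppos g m = 2*(v:ℤ) ∧
        ∀ t ∈ Finset.range (m+1), 0 ≤ (0:ℤ) + ppos g t ∧ (0:ℤ) + ppos g t ≤ 2*(v:ℤ)) := by
    intro g
    simp only [G2, Finset.mem_filter, Finset.mem_univ, true_and]
  have hcast : ((2*v+2 : ℕ) : ℤ) = 2*(v:ℤ)+2 := by push_cast; ring
  have hr3 : (2*m+2) + 1 = 2*m+3 := by omega
  rw [b, ← card_G2]
  apply Finset.card_bij' (i := fun p _ => pairsOf p) (j := fun g _ => glue g)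
  case hi =>
    intro p hp
    simp only [bPaths, Finset.mem_filter, Finset.mem_univ, true_and] at hp
    obtain ⟨hfirst, hlast, hpair, hend, hstrip⟩ := hp
    rw [hcast] at hend hstrip
    rw [hr3] at hstrip
    have hc := forward_core (v:ℤ) hK p hend hstrip
    rw [hmemG]
    refine ⟨?_, hc.2.2⟩
    intro i
    have hi := i.isLt
    exact hpair ⟨2*(i:ℕ)+1, by omega⟩ ⟨2*(i:ℕ)+2, by omega⟩
      (show (2*(i:ℕ)+1) % 2 = 1 from by omega)
      (show (2*(i:ℕ)+2) = (2*(i:ℕ)+1) + 1 from by omega)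
      (show (2*(i:ℕ)+1) + 1 ≤ 2*m+2-2 from by omega)
  case hj =>
    intro g hg
    rw [hmemG] at hg
    obtain ⟨hgpair, hend, hstrip⟩ := hg
    have hb := backward_core (v:ℤ) hK g hend hstrip
    simp only [bPaths, Finset.mem_filter, Finset.mem_univ, true_and]
    refine ⟨?_, ?_, ?_, ?_, ?_⟩
    · intro j hj
      unfold glue
      rw [dif_pos hj]
    · intro j hj
      have hj' : (j:ℕ) = 2*m+1 := by omega
      unfold glue
      rw [dif_neg (by omega), dif_pos hj']
    · intro j1 j2 hodd heq hle
      have hj1 := j1.isLt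
      have hj2 := j2.isLt
      unfold glue
      rw [dif_neg (by omega), dif_neg (by omega), dif_pos hodd,
        dif_neg (by omega), dif_neg (by omega), dif_neg (by omega)]
      have hidx : (⟨(j2:ℕ)/2 - 1, by omega⟩ : Fin m) = ⟨(j1:ℕ)/2, by omega⟩ :=
        Fin.ext (by show (j2:ℕ)/2 - 1 = (j1:ℕ)/2; omega)
      rw [hidx]
      exact hgpair _
    · rw [hcast]
      exact hb.1
    · rw [hcast, hr3]
      exact hb.2
  case left_inv =>
    intro p hp
    simp only [bPaths, Finset.mem_filter, Finset.mem_univ, true_and] at hp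
    exact glue_pairsOf p (hp.1 ⟨0, by omega⟩ rfl)
      (hp.2.1 ⟨2*m+1, by omega⟩ (show (2*m+1 : ℕ) = 2*m+2-1 from by omega))
  case right_inv =>
    intro g _
    exact pairsOf_glue g

lemma a_zero (k s : ℕ) (hks : k < s) : a (2*(k:ℤ)) s = 0 := by
  rw [a, Finset.card_eq_zero, Finset.eq_empty_iff_forall_notMem]
  intro p hp
  simp only [aPaths, Finset.mem_filter, Finset.mem_univ, true_and] at hp
  have h1 := hp.2 1 (by rw [Finset.mem_range]; omega)
  rw [pathPos_succ' p 0 1 rfl (by omega), pathPos_zero, zero_add] at h1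
  rcases dir_pm (p ⟨0, by omega⟩) with h | h <;> omega

lemma b_zero (H : ℕ) (hH : 2 ≤ H) : b 0 H = 0 := by
  rw [b, Finset.card_eq_zero, Finset.eq_empty_iff_forall_notMem]
  intro p hp
  simp only [bPaths, Finset.mem_filter, Finset.mem_univ, true_and] at hp
  have h1 := hp.2.2.2.2 1 (by rw [Finset.mem_range]; omega)
  rw [pathPos_succ' p 0 1 rfl (by omega), pathPos_zero, zero_add,
    hp.1 ⟨0, by omega⟩ rfl] at h1
  norm_num [dir] at h1

theorem stmt19aux (k s : ℕ) (hk : 0 < k) (hs : 0 < s) :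
    a (2 * (k : ℤ)) s =
      ∑ I1 ∈ (Finset.Icc 1 k).powerset, ∑ I2 ∈ (Finset.Icc 1 k).powerset,
        if Disjoint I1 I2 then
          b (2 * k + 2 - 2 * s) (2 * k + 2 - 2 * I1.card - 2 * I2.card)
        else 0 := by
  have hScard : (Finset.Icc 1 k).card = k := by rw [Nat.card_Icc]; omega
  by_cases hsk : s ≤ k
  · rw [stepA k s hsk]
    conv_lhs => rw [show c4 (2*((k:ℤ)-s)) k 0 = c4 (2*((k:ℤ)-s)) (Finset.Icc 1 k).card 0
      from by rw [hScard]]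
    rw [← key_sum (2*((k:ℤ)-s)) (Finset.Icc 1 k) 0]
    apply Finset.sum_congr rfl
    intro I1 h1
    apply Finset.sum_congr rfl
    intro I2 h2
    rw [Finset.mem_powerset] at h1 h2
    by_cases hd : Disjoint I1 I2
    · rw [if_pos hd, if_pos hd, hScard]
      have hc : I1.card + I2.card ≤ k := by
        rw [← hScard, ← Finset.card_union_of_disjoint hd]
        exact Finset.card_le_card (Finset.union_subset h1 h2)
      rw [show 2*k+2-2*s = 2*(k-s)+2 from by omega,
        show 2*k+2-2*I1.card-2*I2.card = 2*(k - I1.card - I2.card)+2 from by omega,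
        stepB (k-s) (k - I1.card - I2.card)]
      congr 2
      push_cast [hsk]
      ring
    · rw [if_neg hd, if_neg hd]
  · push_neg at hsk
    rw [a_zero k s hsk]
    symm
    apply Finset.sum_eq_zero
    intro I1 h1
    apply Finset.sum_eq_zero
    intro I2 h2
    rw [Finset.mem_powerset] at h1 h2
    by_cases hd : Disjoint I1 I2
    · rw [if_pos hd]
      have hc : I1.card + I2.card ≤ k := by
        rw [← hScard, ← Finset.card_union_of_disjoint hd]
        exact Finset.card_le_card (Finset.union_subset h1 h2)
      rw [show 2*k+2-2*s = 0 from by omega]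
      exact b_zero _ (by omega)
    · rw [if_neg hd]

/-- for positive `k`, `s`, the constrained path count `a(2k,s)` decomposes
as a sum, over pairs of disjoint subsets `I₁, I₂ ⊆ {1,…,k}`, of
`b(2k+2-2s, 2k+2-2|I₁|-2|I₂|)`. -/
theorem stmt19 (k s : ℕ) (hk : 0 < k) (hs : 0 < s) :
    a (2 * (k : ℤ)) s =
      ∑ I1 ∈ (Finset.Icc 1 k).powerset, ∑ I2 ∈ (Finset.Icc 1 k).powerset,
        if Disjoint I1 I2 then
          b (2 * k + 2 - 2 * s) (2 * k + 2 - 2 * I1.card - 2 * I2.card)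
        else 0 := by
  exact stmt19aux k s hk hs
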